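/- For every real number α there exists a nonzero real scalar c such that c • (C_∞ · A · exp(−α•B) · A) belongs to the set 𝒞 of applicable projections; that is, every member of the camera family C_{α'} := C_∞ · A · exp(−α•B) · A used for Maxwell's duality is (up to the scalar equivalence of projection matrices) an applicable projection. -/

import Mathlib

open Matrix

/-- The null-polarity matrix used in Cremona's method. -/
def Bmat : Matrix (Fin 4) (Fin 4) ℝ :=
  !![0, -1, 0, 0;
     1,  0, 0, 0;
     0,  0, 0, -1;
     0,  0, 1, 0]

/-- Parallel projection along the z-axis, in homogeneous coordinates. -/
def Cinf : Matrix (Fin 3) (Fin 4) ℝ :=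
  !![1, 0, 0, 0;
     0, 1, 0, 0;
     0, 0, 0, 1]

/-- The basic finite pinhole camera with focal distance `φ`. -/
noncomputable def Cfin (φ : ℝ) : Matrix (Fin 3) (Fin 4) ℝ :=
  !![1, 0, 0, 0;
     0, 1, 0, 0;
     0, 0, φ⁻¹, 0]

/-- The rigid-motion matrix with rotation block `R` and translation column `t`. -/
def Mblock (R : Matrix (Fin 3) (Fin 3) ℝ) (t : Fin 3 → ℝ) : Matrix (Fin 4) (Fin 4) ℝ :=
  Matrix.reindex finSumFinEquiv finSumFinEquiv
    (Matrix.fromBlocks R (Matrix.replicateCol (Fin 1) t)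
      (0 : Matrix (Fin 1) (Fin 3) ℝ) (1 : Matrix (Fin 1) (Fin 1) ℝ))

/-- The set `𝒞` of applicable projections: finite pinhole cameras and parallel
projections. -/
def applicableProjections : Set (Matrix (Fin 3) (Fin 4) ℝ) :=
  {C | (∃ φ : ℝ, φ ≠ 0 ∧ ∃ R ∈ Matrix.specialOrthogonalGroup (Fin 3) ℝ, ∃ t : Fin 3 → ℝ,
          C = Cfin φ * Mblock R t) ∨
       (∃ ψ : ℝ, ψ ≠ 0 ∧ ∃ R ∈ Matrix.specialOrthogonalGroup (Fin 3) ℝ, ∃ t : Fin 3 → ℝ,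
          C = !![1, 0, 0; 0, ψ, 0; 0, 0, 1] * Cinf * Mblock R t)}


/-- The duality used by Maxwell (swap of the 3rd and 4th coordinates). -/
def Amat : Matrix (Fin 4) (Fin 4) ℝ :=
  !![1, 0, 0, 0;
     0, 1, 0, 0;
     0, 0, 0, 1;
     0, 0, 1, 0]

/-!
Since `B² = -1`, the exponential `exp (-α • B) = cos α • 1 - sin α • B` is a rotation in the
coordinate planes `(x, y)` and `(z, w)`, and the camera `C∞ A exp (-α • B) A` has rows
`(cos α, sin α, 0, 0)`, `(-sin α, cos α, 0, 0)`, `(0, 0, sin α, cos α)`. If `sin α ≠ 0` this is the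
pinhole camera of focal distance `1 / sin α` placed by the rotation about the `z`-axis through `-α`
and the translation `(0, 0, cot α)`; if `sin α = 0`, then `cos α = ±1` and rescaling by `cos α`
gives `C∞` itself.
-/

theorem NormedSpace.exp_smul_eq_cos_smul_one_add_sin_smul {𝔸 : Type*} [NormedRing 𝔸]
    [NormedAlgebra ℝ 𝔸] [Algebra ℚ 𝔸] {J : 𝔸} (hJ : J * J = -1) (θ : ℝ) :
    NormedSpace.exp (θ • J) = Real.cos θ • (1 : 𝔸) + Real.sin θ • J := by
  -- `J` is the image of `I` under the ℝ-algebra map `ℂ → 𝔸`, which commutes with `exp`.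
  set f := Complex.liftAux J hJ
  have hf : Continuous f := LinearMap.continuous_of_finiteDimensional f.toLinearMap
  calc NormedSpace.exp (θ • J)
      = NormedSpace.exp (f (θ • Complex.I)) := by rw [map_smul, Complex.liftAux_apply_I]
    _ = f (Complex.exp (θ * Complex.I)) := by
        rw [← NormedSpace.map_exp f hf, Complex.exp_eq_exp_ℂ, Complex.real_smul]
    _ = Real.cos θ • 1 + Real.sin θ • J := by
        rw [Complex.liftAux_apply, Complex.exp_ofReal_mul_I_re, Complex.exp_ofReal_mul_I_im,
          Algebra.algebraMap_eq_smul_one]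

theorem Bmat_mul_self : Bmat * Bmat = -1 := by
  ext i j
  fin_cases i <;> fin_cases j <;> simp [Bmat, Matrix.mul_apply, Fin.sum_univ_four]

theorem exp_smul_Bmat (θ : ℝ) :
    NormedSpace.exp (θ • Bmat) = Real.cos θ • (1 : Matrix (Fin 4) (Fin 4) ℝ) + Real.sin θ • Bmat :=
  letI := Matrix.linftyOpNormedRing (n := Fin 4) (α := ℝ)
  letI := Matrix.linftyOpNormedAlgebra (n := Fin 4) (R := ℝ) (α := ℝ)
  NormedSpace.exp_smul_eq_cos_smul_one_add_sin_smul Bmat_mul_self θ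

theorem Cinf_mul_Amat_mul_exp_mul_Amat (α : ℝ) :
    Cinf * Amat * NormedSpace.exp ((-α) • Bmat) * Amat =
      !![Real.cos α, Real.sin α, 0, 0;
         -Real.sin α, Real.cos α, 0, 0;
         0, 0, Real.sin α, Real.cos α] := by
  rw [exp_smul_Bmat, Real.cos_neg, Real.sin_neg]
  ext i j
  fin_cases i <;> fin_cases j <;>
    simp [Cinf, Amat, Bmat, Matrix.mul_apply, Fin.sum_univ_four, Matrix.one_apply,
      Matrix.vecMul, dotProduct]

theorem Mblock_eq (R : Matrix (Fin 3) (Fin 3) ℝ) (t : Fin 3 → ℝ) :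
    Mblock R t = !![R 0 0, R 0 1, R 0 2, t 0;
                    R 1 0, R 1 1, R 1 2, t 1;
                    R 2 0, R 2 1, R 2 2, t 2;
                    0, 0, 0, 1] := by
  ext i j
  fin_cases i <;> fin_cases j <;>
    simp [Mblock, Matrix.fromBlocks, finSumFinEquiv, Fin.addCases, Matrix.replicateCol] <;> rfl

theorem Mblock_one_zero : Mblock 1 0 = 1 := by
  rw [Mblock_eq]
  ext i j
  fin_cases i <;> fin_cases j <;> rfl

theorem Cfin_mul_Mblock (φ : ℝ) (R : Matrix (Fin 3) (Fin 3) ℝ) (t : Fin 3 → ℝ) :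
    Cfin φ * Mblock R t = !![R 0 0, R 0 1, R 0 2, t 0;
                             R 1 0, R 1 1, R 1 2, t 1;
                             φ⁻¹ * R 2 0, φ⁻¹ * R 2 1, φ⁻¹ * R 2 2, φ⁻¹ * t 2] := by
  rw [Mblock_eq]
  ext i j
  fin_cases i <;> fin_cases j <;> simp [Cfin, Matrix.mul_apply, Fin.sum_univ_four]

/-- Rotation by `-θ` about the `z`-axis. -/
noncomputable def rotZ (θ : ℝ) : Matrix (Fin 3) (Fin 3) ℝ :=
  !![Real.cos θ, Real.sin θ, 0;
     -Real.sin θ, Real.cos θ, 0;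
     0, 0, 1]

theorem rotZ_mem_specialOrthogonalGroup (θ : ℝ) :
    rotZ θ ∈ Matrix.specialOrthogonalGroup (Fin 3) ℝ := by
  have h := Real.sin_sq_add_cos_sq θ
  refine ⟨(Matrix.mem_orthogonalGroup_iff _ _).mpr ?_, ?_⟩
  · ext i j
    fin_cases i <;> fin_cases j <;>
      simp [rotZ, Matrix.mul_apply, Fin.sum_univ_three] <;> linarith
  · simp [rotZ, Matrix.det_fin_three]
    linarith

/-- For every real `α` there is a nonzero scalar `c` such that
`c • (C∞ * A * exp (-α • B) * A)` is an applicable projection: every member of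
the camera family `C_{α'} := C∞ * A * exp (-α • B) * A` used for Maxwell's
duality is, up to scalar equivalence, in `𝒞`. -/
theorem maxwell_camera_family_applicable (α : ℝ) :
    ∃ c : ℝ, c ≠ 0 ∧
      c • (Cinf * Amat * NormedSpace.exp ((-α) • Bmat) * Amat) ∈
        applicableProjections := by
  rw [Cinf_mul_Amat_mul_exp_mul_Amat]
  by_cases hs : Real.sin α = 0
  · have hc : Real.cos α ^ 2 = 1 := by simpa [hs] using Real.sin_sq_add_cos_sq α
    refine ⟨Real.cos α, by rintro h; simp [h] at hc, Or.inr ⟨1, one_ne_zero, 1, one_mem _, 0, ?_⟩⟩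
    rw [← Matrix.one_fin_three, Mblock_one_zero, Matrix.one_mul, Matrix.mul_one, hs]
    ext i j
    fin_cases i <;> fin_cases j <;> simp [Cinf, ← sq, hc]
  · refine ⟨1, one_ne_zero, Or.inl ⟨(Real.sin α)⁻¹, inv_ne_zero hs, rotZ α,
      rotZ_mem_specialOrthogonalGroup α, ![0, 0, Real.cos α / Real.sin α], ?_⟩⟩
    rw [one_smul, Cfin_mul_Mblock]
    ext i j
    fin_cases i <;> fin_cases j <;> simp [rotZ, mul_div_cancel₀ _ hs]
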